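/- Let K, K′ be unit-area regular hexagons in the torus T and σ, σ′ edges of K, K′ respectively. There exist η > 0 and C > 0 (independent of T) such that if hd(σ, σ′) ≤ η and |K Δ K′| ≥ 2 − η, then hd(∂g_σ(K), ∂K′) ≤ C·hd(σ, σ′), where g_σ(K) is the reflection of K across the line containing σ. -/

import Mathlib

open Real Set MeasureTheory

/-- Side length (= circumradius) of the unit-area regular hexagon: `12^{1/4}/3`. -/
noncomputable def hexSide : ℝ := (12 : ℝ) ^ ((1 : ℝ) / 4) / 3

/-- The `j`-th vertex of the unit-area regular hexagon with center `c`,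
rotated by angle `θ`. -/
noncomputable def hexVtx (c : ℂ) (θ : ℝ) (j : ℕ) : ℂ :=
  c + Complex.exp (θ * Complex.I) * ((hexSide : ℂ) * Complex.exp (j * (π / 3) * Complex.I))

/-- The unit-area regular hexagon with center `c` rotated by angle `θ`. -/
noncomputable def hexSet (c : ℂ) (θ : ℝ) : Set ℂ :=
  convexHull ℝ (Set.range fun j : Fin 6 => hexVtx c θ j)

/-- The `j`-th (closed) edge of the hexagon `hexSet c θ`. -/
noncomputable def hexEdge (c : ℂ) (θ : ℝ) (j : Fin 6) : Set ℂ :=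
  segment ℝ (hexVtx c θ j) (hexVtx c θ ((j + 1 : Fin 6) : ℕ))

/-- Reflection of the plane across the line through the distinct points `a, b`. -/
noncomputable def reflLine (a b : ℂ) (z : ℂ) : ℂ :=
  a + ((b - a) ^ 2 / ((‖b - a‖ : ℝ) : ℂ) ^ 2) * (starRingEnd ℂ) (z - a)

/-!
A hexagon having the oriented segment from `a` to `b` as an edge, and lying to its left, is the
image under `z ↦ a + (b - a) * z` of the regular hexagon `H` with consecutive vertices `0, 1`.
The hexagon spanned by the sixth roots of unity is invariant under conjugation and negation, so
`conj H = 1 - H`: reflecting across the line `ab` gives the hexagon on the reversed edge `b → a`.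

Two segments at Hausdorff distance `d` have their endpoints matched within `3 d`, either in order
or reversed. In the first case `K` and `K'` both lie in one disc of area less than `2 - η`,
which contradicts `|K Δ K'| ≥ 2 - η`. In the second case `g_σ(K)` and `K'` are the images of `H`
under two affine maps that differ by `O(d)` on `H`, so their boundaries are `O(d)`-close.
-/

namespace Metric

variable {α β : Type*} [PseudoMetricSpace β]

theorem exists_dist_le_of_hausdorffDist_le [PseudoMetricSpace α] {s t : Set α} {x : α} {d : ℝ}
    (hs : Bornology.IsBounded s) (ht : IsCompact t) (hne : t.Nonempty)
    (h : hausdorffDist s t ≤ d) (hx : x ∈ s) : ∃ y ∈ t, dist x y ≤ d := by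
  obtain ⟨y, hy, hxy⟩ := ht.exists_infDist_eq_dist hne x
  have hfin := hausdorffEDist_ne_top_of_nonempty_of_bounded ⟨x, hx⟩ hne hs ht.isBounded
  exact ⟨y, hy, hxy ▸ (infDist_le_hausdorffDist_of_mem hx hfin).trans h⟩

theorem hausdorffDist_image_le_of_dist_le {f g : α → β} {s : Set α} {r : ℝ} (hr : 0 ≤ r)
    (h : ∀ x ∈ s, dist (f x) (g x) ≤ r) : hausdorffDist (f '' s) (g '' s) ≤ r := by
  refine hausdorffDist_le_of_mem_dist hr ?_ ?_
  · rintro _ ⟨x, hx, rfl⟩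
    exact ⟨g x, mem_image_of_mem g hx, h x hx⟩
  · rintro _ ⟨x, hx, rfl⟩
    exact ⟨f x, mem_image_of_mem f hx, dist_comm (f x) (g x) ▸ h x hx⟩

end Metric

section Segment

variable {E : Type*} [NormedAddCommGroup E] [InnerProductSpace ℝ E]

theorem isCompact_segment (a b : E) : IsCompact (segment ℝ a b) := by
  rw [segment_eq_image_lineMap]
  exact isCompact_Icc.image AffineMap.lineMap_continuous

noncomputable def lineCoord (a b x : E) : ℝ := inner ℝ (b - a) (x - a) / ‖b - a‖

theorem abs_lineCoord_sub_le (a b x y : E) :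
    |lineCoord a b x - lineCoord a b y| ≤ dist x y := by
  rw [lineCoord, lineCoord, ← sub_div, ← inner_sub_right, sub_sub_sub_cancel_right, abs_div,
    abs_norm, dist_eq_norm]
  exact div_le_of_le_mul₀ (norm_nonneg _) (norm_nonneg _)
    ((abs_real_inner_le_norm _ _).trans_eq (mul_comm _ _))

theorem lineCoord_of_mem_segment {a b p : E} (hp : p ∈ segment ℝ a b) :
    lineCoord a b p = dist a p := by
  obtain ⟨t, ht, rfl⟩ := (segment_eq_image' ℝ a b).subset hp
  rw [lineCoord, add_sub_cancel_left, inner_smul_right, real_inner_self_eq_norm_sq,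
    dist_eq_norm, sub_add_cancel_left, norm_neg, norm_smul, Real.norm_of_nonneg ht.1]
  rcases eq_or_ne ‖b - a‖ 0 with h | h
  · simp [h]
  · field_simp

theorem lineCoord_mem_uIcc {a b a' b' x : E} (hx : x ∈ segment ℝ a' b') :
    lineCoord a b x ∈ Set.uIcc (lineCoord a b a') (lineCoord a b b') := by
  let L : E →ᵃ[ℝ] ℝ := (‖b - a‖⁻¹ • innerₛₗ ℝ (b - a)).toAffineMap -
    AffineMap.const ℝ E (‖b - a‖⁻¹ * inner ℝ (b - a) a)
  have hL : ∀ y, L y = lineCoord a b y := fun y => by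
    simp [L, lineCoord, inner_sub_right, inner_sub_left]
    ring
  rw [← segment_eq_uIcc, ← hL, ← hL, ← hL, ← image_segment]
  exact Set.mem_image_of_mem L hx

theorem dist_endpoints_le_of_lineCoord_le {a b a' b' : E} {d : ℝ}
    (h : Metric.hausdorffDist (segment ℝ a b) (segment ℝ a' b') ≤ d)
    (horder : lineCoord a b a' ≤ lineCoord a b b') :
    dist a a' ≤ 3 * d ∧ dist b b' ≤ 3 * d := by
  have near : ∀ {p q r s : E}, Metric.hausdorffDist (segment ℝ p q) (segment ℝ r s) ≤ d →
      ∀ x ∈ segment ℝ p q, ∃ y ∈ segment ℝ r s, dist x y ≤ d := fun h _ hx =>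
    Metric.exists_dist_le_of_hausdorffDist_le (isCompact_segment _ _).isBounded
      (isCompact_segment _ _) ⟨_, left_mem_segment ℝ _ _⟩ h hx
  have h' := Metric.hausdorffDist_comm (s := segment ℝ a b) ▸ h
  have coord_le (x y : E) := (abs_le.mp (abs_lineCoord_sub_le a b x y)).2
  have coord_a : lineCoord a b a = 0 := by
    rw [lineCoord_of_mem_segment (left_mem_segment ℝ a b), dist_self]
  have coord_b : lineCoord a b b = dist a b := lineCoord_of_mem_segment (right_mem_segment ℝ a b)
  obtain ⟨x, hx, hax⟩ := near h a (left_mem_segment ℝ a b)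
  obtain ⟨y, hy, hby⟩ := near h b (right_mem_segment ℝ a b)
  obtain ⟨p, hp, ha'p⟩ := near h' a' (left_mem_segment ℝ a' b')
  obtain ⟨q, hq, hb'q⟩ := near h' b' (right_mem_segment ℝ a' b')
  have hx' := Set.uIcc_of_le horder ▸ lineCoord_mem_uIcc (a := a) (b := b) hx
  have hy' := Set.uIcc_of_le horder ▸ lineCoord_mem_uIcc (a := a) (b := b) hy
  have hap : dist a p ≤ 2 * d := by
    rw [← lineCoord_of_mem_segment hp]
    linarith [coord_le p a', coord_le x a, hx'.1, dist_comm x a, dist_comm p a']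
  have hqb : dist q b ≤ 2 * d := by
    have := dist_add_dist_of_mem_segment hq
    rw [← lineCoord_of_mem_segment hq] at this
    linarith [coord_le b' q, coord_le b y, hy'.2]
  constructor
  · linarith [dist_triangle a p a', dist_comm p a']
  · linarith [dist_triangle b q b', dist_comm q b', dist_comm q b]

theorem dist_endpoints_le_of_hausdorffDist_segment_le {a b a' b' : E} {d : ℝ}
    (h : Metric.hausdorffDist (segment ℝ a b) (segment ℝ a' b') ≤ d) :
    (dist a a' ≤ 3 * d ∧ dist b b' ≤ 3 * d) ∨ (dist a b' ≤ 3 * d ∧ dist b a' ≤ 3 * d) := by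
  rcases le_total (lineCoord a b a') (lineCoord a b b') with horder | horder
  · exact .inl (dist_endpoints_le_of_lineCoord_le h horder)
  · rw [segment_symm ℝ a' b'] at h
    exact .inr (dist_endpoints_le_of_lineCoord_le h horder)

end Segment

theorem Complex.dist_add_sub_mul_le (a b a' b' u : ℂ) :
    dist (a + (b - a) * u) (a' + (b' - a') * u) ≤ ‖1 - u‖ * dist a a' + ‖u‖ * dist b b' := by
  rw [dist_eq_norm, dist_eq_norm, dist_eq_norm,
    show a + (b - a) * u - (a' + (b' - a') * u) = (1 - u) * (a - a') + u * (b - b') by ring,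
    ← norm_mul, ← norm_mul]
  exact norm_add_le _ _

section Hexagon

open ComplexConjugate

theorem hexSide_pos : 0 < hexSide := by
  rw [hexSide]
  positivity

theorem hexSide_le : hexSide ≤ 2 / 3 := by
  have h : (12 : ℝ) ^ ((1 : ℝ) / 4) ≤ 2 :=
    calc (12 : ℝ) ^ ((1 : ℝ) / 4) ≤ ((2 : ℝ) ^ (4 : ℝ)) ^ ((1 : ℝ) / 4) := by gcongr; norm_num
      _ = 2 := by rw [← Real.rpow_mul (by norm_num)]; norm_num
  rw [hexSide]
  linarith

noncomputable def zeta6 : ℂ := Complex.exp (π / 3 * Complex.I)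

theorem zeta6_isPrimitiveRoot : IsPrimitiveRoot zeta6 6 := by
  convert Complex.isPrimitiveRoot_exp 6 (by norm_num) using 1
  rw [zeta6]
  congr 1
  push_cast
  ring

theorem conj_zeta6 : conj zeta6 = 1 - zeta6 := by
  have h : (π / 3 * Complex.I : ℂ) = ((π / 3 : ℝ) : ℂ) * Complex.I := by push_cast; ring
  apply Complex.ext <;>
    simp [zeta6, h, Complex.exp_ofReal_mul_I_re, Complex.exp_ofReal_mul_I_im, Real.cos_pi_div_three]
  norm_num

theorem norm_zeta6 : ‖zeta6‖ = 1 :=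
  Complex.norm_eq_one_of_pow_eq_one zeta6_isPrimitiveRoot.pow_eq_one (by norm_num)

theorem norm_one_sub_zeta6 : ‖1 - zeta6‖ = 1 := by
  rw [← conj_zeta6, Complex.norm_conj, norm_zeta6]

theorem zeta6_sq : zeta6 ^ 2 = zeta6 - 1 := by
  have h := Complex.mul_conj' zeta6
  rw [conj_zeta6, norm_zeta6] at h
  norm_num at h
  linear_combination -h

noncomputable def unitHex : Set ℂ := convexHull ℝ {z : ℂ | z ^ 6 = 1}

theorem range_zeta6_pow : Set.range (fun j : Fin 6 => zeta6 ^ (j : ℕ)) = {z : ℂ | z ^ 6 = 1} := by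
  ext z
  constructor
  · rintro ⟨j, rfl⟩
    show (zeta6 ^ (j : ℕ)) ^ 6 = 1
    rw [← pow_mul, mul_comm, pow_mul, zeta6_isPrimitiveRoot.pow_eq_one, one_pow]
  · intro hz
    obtain ⟨j, hj, rfl⟩ := zeta6_isPrimitiveRoot.eq_pow_of_pow_eq_one hz
    exact ⟨⟨j, hj⟩, rfl⟩

theorem image_mul_unitHex {u : ℂ} (hu : u ^ 6 = 1) : (u * ·) '' unitHex = unitHex := by
  have hroots : (u * ·) '' {z : ℂ | z ^ 6 = 1} = {z : ℂ | z ^ 6 = 1} := by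
    ext z
    constructor
    · rintro ⟨w, hw, rfl⟩
      simp_all [mul_pow]
    · intro hz
      refine ⟨u ^ 5 * z, ?_, ?_⟩
      · show (u ^ 5 * z) ^ 6 = 1
        rw [show (u ^ 5 * z) ^ 6 = (u ^ 6) ^ 5 * z ^ 6 by ring, hu, hz, one_pow, one_mul]
      · linear_combination z * hu
  exact ((LinearMap.mulLeft ℝ u).image_convexHull _).trans (congrArg _ hroots)

theorem image_conj_unitHex : conj '' unitHex = unitHex := by
  have hroots : conj '' {z : ℂ | z ^ 6 = 1} = {z : ℂ | z ^ 6 = 1} := by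
    ext z
    constructor
    · rintro ⟨w, hw, rfl⟩
      simp_all [← map_pow]
    · intro hz
      exact ⟨conj z, by simp_all [← map_pow], Complex.conj_conj z⟩
  exact (Complex.conjAe.toLinearMap.image_convexHull _).trans (congrArg _ hroots)

theorem unitHex_subset_closedBall : unitHex ⊆ Metric.closedBall 0 1 := by
  refine convexHull_min (fun z hz => ?_) (convex_closedBall 0 1)
  rw [mem_closedBall_zero_iff, Complex.norm_eq_one_of_pow_eq_one hz (by norm_num)]


theorem hexVtx_eq (c : ℂ) (θ : ℝ) (n : ℕ) :
    hexVtx c θ n = c + Complex.exp (θ * Complex.I) * hexSide * zeta6 ^ n := by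
  rw [hexVtx, zeta6, ← Complex.exp_nat_mul, mul_assoc (n : ℂ)]
  ring

theorem hexVtx_val_add_one (c : ℂ) (θ : ℝ) (j : Fin 6) :
    hexVtx c θ ((j + 1 : Fin 6) : ℕ) = hexVtx c θ ((j : ℕ) + 1) := by
  rw [hexVtx_eq, hexVtx_eq, Fin.val_add, Fin.val_one, ← pow_mod_orderOf zeta6 ((j : ℕ) + 1),
    ← zeta6_isPrimitiveRoot.eq_orderOf]

theorem hexSet_eq_image (c : ℂ) (θ : ℝ) :
    hexSet c θ = (fun z => c + Complex.exp (θ * Complex.I) * hexSide * z) '' unitHex := by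
  set w := Complex.exp (θ * Complex.I) * hexSide
  have himage := ((LinearMap.mulLeft ℝ w).toAffineMap + AffineMap.const ℝ ℂ c).image_convexHull
    {z : ℂ | z ^ 6 = 1}
  have hf : ⇑((LinearMap.mulLeft ℝ w).toAffineMap + AffineMap.const ℝ ℂ c) =
      fun z => c + w * z := funext fun z => add_comm _ _
  rw [hf, ← range_zeta6_pow, ← Set.range_comp] at himage
  rw [unitHex, ← range_zeta6_pow, himage, hexSet]
  congr 1
  exact congrArg Set.range (funext fun j => hexVtx_eq c θ j)

/-- The regular hexagon having the oriented segment from `a` to `b` as an edge and lying to its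
left; its center is `a + (b - a) * zeta6`. -/
noncomputable def hexOnEdge (a b : ℂ) : Set ℂ := (fun z => a + (b - a) * (zeta6 + z)) '' unitHex

theorem hexSet_eq_hexOnEdge (c : ℂ) (θ : ℝ) (j : Fin 6) :
    hexSet c θ = hexOnEdge (hexVtx c θ j) (hexVtx c θ ((j + 1 : Fin 6) : ℕ)) := by
  set w := Complex.exp (θ * Complex.I) * hexSide
  have hu : (zeta6 ^ (j : ℕ) * (zeta6 - 1)) ^ 6 = 1 := by
    rw [← zeta6_sq, ← pow_add, ← pow_mul, mul_comm, pow_mul, zeta6_isPrimitiveRoot.pow_eq_one,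
      one_pow]
  rw [hexSet_eq_image, ← image_mul_unitHex hu, Set.image_image, hexOnEdge, hexVtx_val_add_one,
    hexVtx_eq, hexVtx_eq]
  refine Set.image_congr fun z _ => ?_
  linear_combination -w * zeta6 ^ (j : ℕ) * zeta6_sq

theorem dist_hexVtx_val_add_one (c : ℂ) (θ : ℝ) (j : Fin 6) :
    dist (hexVtx c θ j) (hexVtx c θ ((j + 1 : Fin 6) : ℕ)) = hexSide := by
  rw [hexVtx_val_add_one, hexVtx_eq, hexVtx_eq, dist_eq_norm, pow_succ,
    show ∀ x y : ℂ, c + x * y - (c + x * (y * zeta6)) = x * y * (1 - zeta6) by intros; ring,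
    norm_mul, norm_mul, norm_mul, norm_pow, norm_zeta6, norm_one_sub_zeta6,
    Complex.norm_exp_ofReal_mul_I, Complex.norm_real, Real.norm_of_nonneg hexSide_pos.le]
  ring

theorem reflLine_add_sub_mul {a b : ℂ} (hab : a ≠ b) (u : ℂ) :
    reflLine a b (a + (b - a) * u) = a + (b - a) * conj u := by
  have hba : b - a ≠ 0 := sub_ne_zero.2 hab.symm
  have hconj : conj (b - a) ≠ 0 := (map_ne_zero _).2 hba
  rw [reflLine, ← Complex.mul_conj', add_sub_cancel_left, map_mul]
  field_simp

theorem image_reflLine_hexOnEdge {a b : ℂ} (hab : a ≠ b) :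
    reflLine a b '' hexOnEdge a b = hexOnEdge b a := by
  conv_rhs => rw [hexOnEdge, ← image_mul_unitHex (u := -1) (by norm_num), ← image_conj_unitHex,
    Set.image_image, Set.image_image]
  rw [hexOnEdge, Set.image_image]
  refine Set.image_congr fun z _ => ?_
  rw [reflLine_add_sub_mul hab, map_add, conj_zeta6]
  ring

theorem frontier_hexOnEdge {a b : ℂ} (hab : a ≠ b) :
    frontier (hexOnEdge a b) = (fun z => a + (b - a) * (zeta6 + z)) '' frontier unitHex :=
  (((Homeomorph.addLeft zeta6).trans (Homeomorph.mulLeft₀ (b - a) (sub_ne_zero.2 hab.symm))).trans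
    (Homeomorph.addLeft a)).image_frontier unitHex |>.symm

theorem hausdorffDist_frontier_hexOnEdge_le {a b a' b' : ℂ} (hab : a ≠ b) (hab' : a' ≠ b') :
    Metric.hausdorffDist (frontier (hexOnEdge a b)) (frontier (hexOnEdge a' b')) ≤
      2 * (dist a a' + dist b b') := by
  rw [frontier_hexOnEdge hab, frontier_hexOnEdge hab']
  refine Metric.hausdorffDist_image_le_of_dist_le (by positivity) fun z hz => ?_
  have hz : ‖z‖ ≤ 1 := mem_closedBall_zero_iff.1 <| frontier_subset_closure.trans
    (closure_minimal unitHex_subset_closedBall Metric.isClosed_closedBall) hz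
  have h₁ : ‖1 - (zeta6 + z)‖ ≤ 2 := by
    rw [← sub_sub]
    linarith [norm_sub_le (1 - zeta6) z, norm_one_sub_zeta6]
  have h₂ : ‖zeta6 + z‖ ≤ 2 := by linarith [norm_add_le zeta6 z, norm_zeta6]
  calc _ ≤ ‖1 - (zeta6 + z)‖ * dist a a' + ‖zeta6 + z‖ * dist b b' :=
        Complex.dist_add_sub_mul_le a b a' b' _
    _ ≤ 2 * dist a a' + 2 * dist b b' := by gcongr
    _ = 2 * (dist a a' + dist b b') := by ring

theorem hexOnEdge_subset_closedBall (a b : ℂ) :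
    hexOnEdge a b ⊆ Metric.closedBall (a + (b - a) * zeta6) (dist a b) := by
  rintro _ ⟨z, hz, rfl⟩
  have hz : ‖z‖ ≤ 1 := mem_closedBall_zero_iff.1 (unitHex_subset_closedBall hz)
  rw [Metric.mem_closedBall, dist_eq_norm,
    show a + (b - a) * (zeta6 + z) - (a + (b - a) * zeta6) = (b - a) * z by ring, norm_mul,
    ← dist_eq_norm', dist_comm]
  exact mul_le_of_le_one_right dist_nonneg hz

theorem volume_symmDiff_hexOnEdge_le {a b a' b' : ℂ} (h : dist a' b' = dist a b) :
    (volume (symmDiff (hexOnEdge a b) (hexOnEdge a' b'))).toReal ≤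
      π * (dist a b + dist a a' + dist b b') ^ 2 := by
  set R := dist a b + dist a a' + dist b b' with hR
  have hcenter : dist (a' + (b' - a') * zeta6) (a + (b - a) * zeta6) ≤ dist a a' + dist b b' := by
    rw [dist_comm]
    simpa [norm_one_sub_zeta6, norm_zeta6] using Complex.dist_add_sub_mul_le a b a' b' zeta6
  have hR₀ : 0 ≤ R := by rw [hR]; positivity
  have hR₁ : dist a b ≤ R := by
    rw [hR]
    linarith [dist_nonneg (x := a) (y := a'), dist_nonneg (x := b) (y := b')]
  have hsub : symmDiff (hexOnEdge a b) (hexOnEdge a' b') ⊆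
      Metric.closedBall (a + (b - a) * zeta6) R := by
    refine Set.symmDiff_subset_union.trans (Set.union_subset ?_ ?_)
    · exact (hexOnEdge_subset_closedBall a b).trans (Metric.closedBall_subset_closedBall hR₁)
    · exact (hexOnEdge_subset_closedBall a' b').trans
        (Metric.closedBall_subset_closedBall' (by linarith))
  calc (volume (symmDiff (hexOnEdge a b) (hexOnEdge a' b'))).toReal
      ≤ (volume (Metric.closedBall (a + (b - a) * zeta6) R)).toReal :=
        ENNReal.toReal_mono (by simp [ENNReal.mul_eq_top]) (measure_mono hsub)
    _ = π * R ^ 2 := by simp [Complex.volume_closedBall, ENNReal.toReal_ofReal hR₀, mul_comm]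

end Hexagon

/-- Step one of Theorem 3.2: there exist `η, C > 0` such that if `K, K′` are unit-area
regular hexagons with edges `σ, σ′` satisfying `hd(σ,σ′) ≤ η` and `|K Δ K′| ≥ 2 − η`,
then `hd(∂ g_σ(K), ∂K′) ≤ C·hd(σ,σ′)`, where `g_σ(K)` is the reflection of `K`
across the line containing `σ`. -/
theorem reflected_hexagon_hausdorff_estimate :
    ∃ η > (0 : ℝ), ∃ C > (0 : ℝ),
      ∀ (c c' : ℂ) (θ θ' : ℝ) (j j' : Fin 6),
        Metric.hausdorffDist (hexEdge c θ j) (hexEdge c' θ' j') ≤ η →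
        (MeasureTheory.volume (symmDiff (hexSet c θ) (hexSet c' θ'))).toReal ≥ 2 - η →
        Metric.hausdorffDist
            (frontier (reflLine (hexVtx c θ j) (hexVtx c θ ((j + 1 : Fin 6) : ℕ)) ''
              hexSet c θ))
            (frontier (hexSet c' θ'))
          ≤ C * Metric.hausdorffDist (hexEdge c θ j) (hexEdge c' θ' j') := by
  refine ⟨1 / 100, by norm_num, 12, by norm_num, fun c c' θ θ' j j' hclose hfar => ?_⟩
  have hside := dist_hexVtx_val_add_one c θ j
  have hside' := dist_hexVtx_val_add_one c' θ' j'
  rw [hexSet_eq_hexOnEdge c θ j, hexSet_eq_hexOnEdge c' θ' j'] at hfar ⊢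
  set a := hexVtx c θ j
  set b := hexVtx c θ ((j + 1 : Fin 6) : ℕ)
  set a' := hexVtx c' θ' j'
  set b' := hexVtx c' θ' ((j' + 1 : Fin 6) : ℕ)
  set d := Metric.hausdorffDist (hexEdge c θ j) (hexEdge c' θ' j')
  have hne : a ≠ b := dist_pos.1 (hside ▸ hexSide_pos)
  have hne' : a' ≠ b' := dist_pos.1 (hside' ▸ hexSide_pos)
  rcases dist_endpoints_le_of_hausdorffDist_segment_le (le_refl d) with ⟨haa', hbb'⟩ | ⟨hab', hba'⟩
  · -- same orientation: `K` and `K'` both lie in a disc of area less than `2 - η`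
    have hvol := volume_symmDiff_hexOnEdge_le (hside'.trans hside.symm)
    have hR : hexSide + dist a a' + dist b b' ≤ 3 / 4 := by linarith [hexSide_le]
    have : π * (hexSide + dist a a' + dist b b') ^ 2 ≤ 3.15 * (3 / 4) ^ 2 := by
      gcongr
      exacts [Real.pi_lt_d2.le, add_nonneg (add_nonneg hexSide_pos.le dist_nonneg) dist_nonneg]
    rw [hside] at hvol
    linarith
  · rw [image_reflLine_hexOnEdge hne]
    linarith [hausdorffDist_frontier_hexOnEdge_le hne.symm hne']
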